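/- (Vectorial plateaued construction) Let p be a prime, r ≥ 1, m ≥ 3, 0 ≤ s ≤ r (r+s even if p=2), {α_0,...,α_{m−1}} a basis of 𝔽_{p^m} over 𝔽_p, f_0,...,f_{p−1} : V_r → 𝔽_p s-plateaued functions, and G a permutation of 𝔽_{p^m} with G(0)=0. Define h_i(x, y₁, y₂) = f_{Tr(α_0 G(y₁ y₂^{p^m−2}))}(x) + Tr(α_i G(y₁ y₂^{p^m−2})) for 1 ≤ i ≤ m−1. Then for every nonzero (a_1,...,a_{m−1}) ∈ 𝔽_p^{m−1}, the function ∑_i a_i h_i is an s-plateaued function if ∑ a_i ≠ 0, and an r-plateaued function if ∑ a_i = 0. -/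

import Mathlib

/-- The complex primitive `m`-th root of unity `e^{2πi/m}`. -/
noncomputable def zeta (m : ℕ) : ℂ := Complex.exp (2 * Real.pi * Complex.I / m)

/-- Inner product on `(ZMod p)^n`. -/
def dot {p n : ℕ} (a x : Fin n → ZMod p) : ZMod p := ∑ i, a i * x i

/-- Walsh transform of a generalized p-ary function `f : (ZMod p)^n → ZMod (p^k)`. -/
noncomputable def walsh (p n k : ℕ) [Fact (Nat.Prime p)]
    (f : (Fin n → ZMod p) → ZMod (p ^ k)) (a : Fin n → ZMod p) : ℂ :=
  ∑ x : Fin n → ZMod p, zeta (p ^ k) ^ (f x).val * zeta p ^ ((-(dot a x)).val)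

/-- Walsh transform of a p-ary function on `(ZMod p)^r × F × F`. -/
noncomputable def walshRF (p r : ℕ) [Fact (Nat.Prime p)]
    (F : Type) [Field F] [Fintype F] [Algebra (ZMod p) F]
    (h : (Fin r → ZMod p) × F × F → ZMod p) (a : (Fin r → ZMod p) × F × F) : ℂ :=
  ∑ x : (Fin r → ZMod p) × F × F,
    zeta p ^ ((h x - dot a.1 x.1 - Algebra.trace (ZMod p) F (a.2.1 * x.2.1) -
      Algebra.trace (ZMod p) F (a.2.2 * x.2.2)).val)

/-- Walsh transform of a p-ary function on `(ZMod p)^r`. -/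
noncomputable def walshP (p r : ℕ) [Fact (Nat.Prime p)]
    (f : (Fin r → ZMod p) → ZMod p) (b : Fin r → ZMod p) : ℂ :=
  ∑ x : Fin r → ZMod p, zeta p ^ ((f x - dot b x).val)

/-! Write ε = ∑ aᵢ and β = ∑ aᵢ αᵢ₊₁. Since y₂^(p^m-2) = y₂⁻¹, the component is
(x, y₁, y₂) ↦ ε f_c(x) + Tr(β G(y₁/y₂)) with c = Tr(α₀ G(y₁/y₂)). Substituting y₁ = z y₂ and
summing the character of the trace form over y₂ turns its Walsh transform at (b, b₁, b₂) into
p^m Φ(-b₂/b₁) - ∑_z Φ(z), where Φ(z) = ζ_p^Tr(β G z) · W_{ε f_{Tr(α₀ G z)}}(b). Reindexing by the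
permutation G and expanding in the Fourier basis of 𝔽_p shows ∑_z Φ(z) = 0, because β is not an
𝔽_p-multiple of α₀. Hence |W| = p^m |W_{ε f_c}(b)| for a single c. For ε ≠ 0, ε f_c is again
s-plateaued: |W_g(b)|² is a rational number written as a polynomial in ζ_p with integer
coefficients, so it is invariant under the Galois action ζ_p ↦ ζ_p^ε. For ε = 0 the component
sees the zero function, which is r-plateaued. -/

open Finset Polynomial ZMod

lemma AddChar.map_sum_eq_prod {ι A M : Type*} [AddCommMonoid A] [CommMonoid M]
    (ψ : AddChar A M) (s : Finset ι) (x : ι → A) : ψ (∑ i ∈ s, x i) = ∏ i ∈ s, ψ (x i) :=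
  map_prod ψ.toMonoidHom (fun i => Multiplicative.ofAdd (x i)) s

lemma dot_smul_left {p n : ℕ} (c : ZMod p) (b x : Fin n → ZMod p) :
    dot (c • b) x = c * dot b x := by
  simp only [dot, mul_sum, Pi.smul_apply, smul_eq_mul, mul_assoc]

lemma pow_card_sub_two_eq_inv {K : Type*} [Field K] [Fintype K] (hK : 2 < Fintype.card K)
    (a : K) : a ^ (Fintype.card K - 2) = a⁻¹ := by
  rcases eq_or_ne a 0 with rfl | ha
  · simp [zero_pow (show Fintype.card K - 2 ≠ 0 by omega)]
  · refine eq_inv_of_mul_eq_one_left ?_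
    rw [← pow_succ, show Fintype.card K - 2 + 1 = Fintype.card K - 1 by omega,
      FiniteField.pow_card_sub_one_eq_one a ha]

lemma LinearIndependent.smul_add_sum_smul_succ_ne_zero {R M : Type*} [Ring R] [AddCommGroup M]
    [Module R M] {m : ℕ} (hm : 0 < m) {α : Fin m → M} (hα : LinearIndependent R α)
    {a : Fin (m - 1) → R} (ha : a ≠ 0) (t : R) :
    t • α ⟨0, hm⟩ + ∑ i : Fin (m - 1), a i • α ⟨i + 1, by omega⟩ ≠ 0 := by
  obtain ⟨n, rfl⟩ : ∃ n, m = n + 1 := ⟨m - 1, by omega⟩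
  intro h
  have hcons := Fintype.linearIndependent_iff.mp hα (Fin.cons t a) (by
    rw [Fin.sum_univ_succ]
    exact h)
  exact ha (funext fun i => by simpa using hcons i.succ)

lemma zeta_pow_val_eq_stdAddChar {p : ℕ} [NeZero p] (t : ZMod p) :
    zeta p ^ t.val = stdAddChar t := by
  rw [zeta, ← Complex.exp_nat_mul, stdAddChar_apply, toCircle_apply]
  congr 1
  ring

lemma stdAddChar_mul_eq_pow {p : ℕ} [NeZero p] (ε t : ZMod p) :
    (stdAddChar (ε * t) : ℂ) = stdAddChar ε ^ t.val := by
  rw [← AddChar.map_nsmul_eq_pow, nsmul_eq_mul, natCast_zmod_val, mul_comm]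

lemma isPrimitiveRoot_stdAddChar {p : ℕ} [Fact p.Prime] {ε : ZMod p} (hε : ε ≠ 0) :
    IsPrimitiveRoot (stdAddChar ε : ℂ) p := by
  refine IsPrimitiveRoot.iff_orderOf.mpr (orderOf_eq_prime ?_ ?_)
  · rw [← AddChar.map_nsmul_eq_pow, nsmul_eq_mul, natCast_self, zero_mul,
      AddChar.map_zero_eq_one]
  · rwa [← AddChar.map_zero_eq_one (stdAddChar (N := p)), injective_stdAddChar.ne_iff]

lemma IsPrimitiveRoot.sum_pow_eq_of_sum_pow_eq_ratCast {n : ℕ} (hn : 0 < n) {μ ν : ℂ}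
    (hμ : IsPrimitiveRoot μ n) (hν : IsPrimitiveRoot ν n) {ι : Type*} (s : Finset ι)
    (e : ι → ℕ) {v : ℚ} (h : ∑ i ∈ s, μ ^ e i = v) : ∑ i ∈ s, ν ^ e i = v := by
  set P : ℚ[X] := ∑ i ∈ s, X ^ e i - C v
  have aeval_P (z : ℂ) : aeval z P = ∑ i ∈ s, z ^ e i - v := by simp [P]
  have hPμ : aeval μ P = 0 := by rw [aeval_P, h, sub_self]
  have hdvd : minpoly ℚ ν ∣ P := by
    rw [← cyclotomic_eq_minpoly_rat hν hn, cyclotomic_eq_minpoly_rat hμ hn]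
    exact minpoly.dvd ℚ μ hPμ
  rw [← sub_eq_zero, ← aeval_P]
  obtain ⟨Q, hQ⟩ := hdvd
  rw [hQ, map_mul, minpoly.aeval, zero_mul]

lemma ofReal_norm_sq_sum_addChar {A X : Type*} [AddCommGroup A] [Finite A] [Fintype X]
    (ψ : AddChar A ℂ) (k : X → A) :
    ((‖∑ x, ψ (k x)‖ ^ 2 : ℝ) : ℂ) = ∑ q : X × X, ψ (k q.1 - k q.2) := by
  rw [Complex.ofReal_pow, ← Complex.mul_conj', map_sum, sum_mul_sum, ← univ_product_univ,
    sum_product]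
  refine sum_congr rfl fun x _ => sum_congr rfl fun y _ => ?_
  rw [sub_eq_add_neg, AddChar.map_add_eq_mul, AddChar.map_neg_eq_conj]

lemma norm_sq_sum_stdAddChar_mul {p : ℕ} [Fact p.Prime] {X : Type*} [Fintype X]
    (k : X → ZMod p) {ε : ZMod p} (hε : ε ≠ 0) {v : ℚ}
    (hv : ‖∑ x, stdAddChar (k x)‖ ^ 2 = (v : ℝ)) :
    ‖∑ x, stdAddChar (ε * k x)‖ ^ 2 = (v : ℝ) := by
  have hp := (Fact.out : p.Prime).pos
  have expand (η : ZMod p) : ((‖∑ x, stdAddChar (η * k x)‖ ^ 2 : ℝ) : ℂ) =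
      ∑ q : X × X, (stdAddChar η : ℂ) ^ (k q.1 - k q.2).val := by
    rw [ofReal_norm_sq_sum_addChar stdAddChar (fun x => η * k x)]
    simp only [← mul_sub, stdAddChar_mul_eq_pow]
  have h1 : ∑ q : X × X, (stdAddChar (1 : ZMod p) : ℂ) ^ (k q.1 - k q.2).val = (v : ℂ) := by
    rw [← expand]; simp only [one_mul, hv]; push_cast; rfl
  have hε' := (isPrimitiveRoot_stdAddChar one_ne_zero).sum_pow_eq_of_sum_pow_eq_ratCast hp
    (isPrimitiveRoot_stdAddChar hε) _ _ h1
  exact_mod_cast (expand ε).trans hε'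

-- At `b₁ = 0` the junk value `-b₂ / 0 = 0` is the intended point.
lemma sum_div_mul_addChar {K R : Type*} [Field K] [Fintype K] [DecidableEq K] [CommRing R]
    [IsDomain R] {ψ : AddChar K R} (hψ : ψ.IsPrimitive) (Φ : K → R) (hΦ : ∑ z, Φ z = 0)
    (b₁ b₂ : K) :
    ∑ y : K × K, Φ (y.1 / y.2) * ψ (-(b₁ * y.1 + b₂ * y.2)) = Fintype.card K * Φ (-b₂ / b₁) := by
  have fiber (y₂ : K) : ∑ y₁, Φ (y₁ / y₂) * ψ (-(b₁ * y₁ + b₂ * y₂)) =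
      ∑ z, Φ z * ψ (y₂ * -(b₁ * z + b₂)) +
        if y₂ = 0 then Φ 0 * ∑ y₁, ψ (y₁ * -b₁) else 0 := by
    by_cases hy₂ : y₂ = 0
    · simp [hy₂, hΦ, mul_sum, mul_comm]
    · rw [if_neg hy₂, add_zero, ← Equiv.sum_comp (Equiv.mulRight₀ y₂ hy₂)]
      refine sum_congr rfl fun z _ => ?_
      rw [Equiv.mulRight₀_apply, mul_div_cancel_right₀ z hy₂]
      ring_nf
  have hcases : ∑ z, Φ z * (if -(b₁ * z + b₂) = 0 then (Fintype.card K : R) else 0) +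
      Φ 0 * (if -b₁ = 0 then (Fintype.card K : R) else 0) = Fintype.card K * Φ (-b₂ / b₁) := by
    by_cases hb₁ : b₁ = 0
    · simp only [hb₁, zero_mul, zero_add, neg_zero, if_true, div_zero, ← sum_mul, hΦ]
      ring
    · have root (z : K) : -(b₁ * z + b₂) = 0 ↔ z = -b₂ / b₁ := by
        rw [eq_div_iff hb₁]; constructor <;> intro h <;> linear_combination -h
      simp only [root, neg_eq_zero, hb₁, if_false, mul_zero, add_zero, mul_ite, sum_ite_eq',
        mem_univ, if_true]
      ring
  rw [Fintype.sum_prod_type_right, ← hcases]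
  simp only [fiber, sum_add_distrib, sum_ite_eq', mem_univ, if_true]
  rw [sum_comm]
  simp only [← mul_sum, AddChar.sum_mulShift _ hψ, Nat.cast_ite, Nat.cast_zero]

section TraceChar

variable (p : ℕ) [NeZero p] (F : Type*) [Field F] [Algebra (ZMod p) F]

noncomputable def traceChar : AddChar F ℂ :=
  stdAddChar.compAddMonoidHom (Algebra.trace (ZMod p) F).toAddMonoidHom

variable {p F}

lemma traceChar_apply (w : F) :
    traceChar p F w = stdAddChar (Algebra.trace (ZMod p) F w) := rfl

lemma isPrimitive_traceChar [Fact p.Prime] [Finite F] : (traceChar p F).IsPrimitive := by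
  refine AddChar.IsPrimitive.of_ne_one fun h => ?_
  have : Module.Finite (ZMod p) F := .of_finite
  obtain ⟨w, hw⟩ : ∃ w : F, Algebra.trace (ZMod p) F w ≠ 0 := by
    by_contra! h0
    exact one_ne_zero <| (traceForm_nondegenerate (ZMod p) F).1 1 fun y => by
      simpa [Algebra.traceForm_apply] using h0 y
  apply hw
  rw [← injective_stdAddChar.eq_iff, ← traceChar_apply, h, AddChar.one_apply,
    AddChar.map_zero_eq_one]

lemma sum_traceChar_mul_comp_trace_eq_zero [Fact p.Prime] [Fintype F] (g : ZMod p → ℂ) {A B : F}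
    (hAB : ∀ t : ZMod p, t • A + B ≠ 0) :
    ∑ w, traceChar p F (B * w) * g (Algebra.trace (ZMod p) F (A * w)) = 0 := by
  have fourier (c : ZMod p) : g c = ∑ k, (p : ℂ)⁻¹ * 𝓕 g k * stdAddChar (k * c) := by
    conv_lhs => rw [← (dft (N := p) (E := ℂ)).symm_apply_apply g, invDFT_apply]
    simp only [smul_eq_mul, mul_sum]
    exact sum_congr rfl fun k _ => by ring
  have twist (k : ZMod p) (w : F) : traceChar p F (B * w) *
      stdAddChar (k * Algebra.trace (ZMod p) F (A * w)) = traceChar p F (w * (k • A + B)) := by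
    rw [← smul_eq_mul k, ← _root_.map_smul, ← smul_mul_assoc, ← traceChar_apply,
      ← AddChar.map_add_eq_mul]
    ring_nf
  calc ∑ w, traceChar p F (B * w) * g (Algebra.trace (ZMod p) F (A * w))
      = ∑ k, (p : ℂ)⁻¹ * 𝓕 g k * ∑ w, traceChar p F (w * (k • A + B)) := by
        simp only [fourier, mul_sum, ← twist]
        rw [sum_comm]
        exact sum_congr rfl fun k _ => sum_congr rfl fun w _ => by ring
    _ = 0 := by
        classical
        simp [AddChar.sum_mulShift _ isPrimitive_traceChar, hAB]

end TraceChar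

section Walsh

variable {p r : ℕ} [Fact p.Prime]

lemma walshP_eq_sum_stdAddChar (f : (Fin r → ZMod p) → ZMod p) (b : Fin r → ZMod p) :
    walshP p r f b = ∑ x, stdAddChar (f x - dot b x) := by
  simp only [walshP, zeta_pow_val_eq_stdAddChar]

lemma walshP_add_const (f : (Fin r → ZMod p) → ZMod p) (t : ZMod p) (b : Fin r → ZMod p) :
    walshP p r (fun x => f x + t) b = stdAddChar t * walshP p r f b := by
  simp only [walshP_eq_sum_stdAddChar, mul_sum, ← AddChar.map_add_eq_mul]
  exact sum_congr rfl fun x _ => by ring_nf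

lemma walshP_zero (b : Fin r → ZMod p) :
    walshP p r (fun _ => 0) b = ∏ i, if b i = 0 then (p : ℂ) else 0 := by
  classical
  calc walshP p r (fun _ => 0) b
      = ∑ x : Fin r → ZMod p, ∏ i, (stdAddChar (x i * -b i) : ℂ) := by
        rw [walshP_eq_sum_stdAddChar]
        refine sum_congr rfl fun x _ => ?_
        rw [zero_sub, dot, ← sum_neg_distrib, AddChar.map_sum_eq_prod]
        simp only [mul_neg, mul_comm (b _)]
    _ = ∏ i, ∑ t : ZMod p, (stdAddChar (t * -b i) : ℂ) :=
        (Fintype.prod_sum fun i t => (stdAddChar (t * -b i) : ℂ)).symm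
    _ = ∏ i, if b i = 0 then (p : ℂ) else 0 := by
        simp only [AddChar.sum_mulShift _ (isPrimitive_stdAddChar p), ZMod.card, neg_eq_zero,
          Nat.cast_ite, Nat.cast_zero]

end Walsh

def IsPlateaued (p r s : ℕ) [Fact p.Prime] (f : (Fin r → ZMod p) → ZMod p) : Prop :=
  ∀ b, ‖walshP p r f b‖ = (p : ℝ) ^ (((r : ℝ) + (s : ℝ)) / 2) ∨ walshP p r f b = 0

section Plateaued

variable {p r : ℕ} [Fact p.Prime]

lemma isPlateaued_zero : IsPlateaued p r r (fun _ => 0) := by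
  intro b
  rw [walshP_zero]
  by_cases hb : b = 0
  · left
    simp only [hb, Pi.zero_apply, if_true, prod_const, card_univ, Fintype.card_fin, norm_pow,
      Complex.norm_natCast, ← Real.rpow_natCast]
    ring_nf
  · right
    obtain ⟨j, hj⟩ := Function.ne_iff.mp hb
    exact prod_eq_zero (mem_univ j) (if_neg hj)

lemma IsPlateaued.const_mul {s : ℕ} {f : (Fin r → ZMod p) → ZMod p} (hf : IsPlateaued p r s f)
    {ε : ZMod p} (hε : ε ≠ 0) : IsPlateaued p r s (fun x => ε * f x) := by
  intro b
  set k := fun x => f x - dot (ε⁻¹ • b) x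
  have hk : walshP p r f (ε⁻¹ • b) = ∑ x, stdAddChar (k x) := walshP_eq_sum_stdAddChar _ _
  have hεk : walshP p r (fun x => ε * f x) b = ∑ x, stdAddChar (ε * k x) := by
    rw [walshP_eq_sum_stdAddChar]
    simp only [k, dot_smul_left, mul_sub, mul_inv_cancel_left₀ hε]
  have hP : 0 ≤ (p : ℝ) ^ (((r : ℝ) + (s : ℝ)) / 2) := by positivity
  rw [hεk]
  rcases hf (ε⁻¹ • b) with h | h
  · left
    refine (pow_left_inj₀ (norm_nonneg _) hP two_ne_zero).mp ?_
    have hsq : ((p : ℝ) ^ (((r : ℝ) + (s : ℝ)) / 2)) ^ 2 = ((p ^ (r + s) : ℕ) : ℚ) := by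
      rw [← Real.rpow_natCast, ← Real.rpow_mul (Nat.cast_nonneg p)]
      push_cast
      rw [← Real.rpow_natCast]
      push_cast
      ring_nf
    rw [hsq]
    exact norm_sq_sum_stdAddChar_mul k hε (by rw [← hk, h, hsq])
  · right
    have := norm_sq_sum_stdAddChar_mul k hε (v := 0) (by rw [← hk, h]; simp)
    simpa using this

end Plateaued

lemma norm_eq_rpow_or_eq_zero_of_norm_eq_pow_mul {q x y : ℝ} (hq : 0 < q) {m : ℕ} {W S : ℂ}
    (hW : ‖W‖ = q ^ m * ‖S‖) (hS : ‖S‖ = q ^ ((x + y) / 2) ∨ S = 0) :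
    ‖W‖ = q ^ ((x + 2 * m + y) / 2) ∨ W = 0 := by
  rcases hS with hS | hS
  · left
    rw [hW, hS, ← Real.rpow_natCast, ← Real.rpow_add hq]
    ring_nf
  · right
    rw [← norm_eq_zero, hW, hS, norm_zero, mul_zero]

section WalshRF

variable {p r : ℕ} [Fact p.Prime] {F : Type} [Field F] [Fintype F] [Algebra (ZMod p) F]

lemma walshRF_comp_div (H : F → (Fin r → ZMod p) → ZMod p) (b : (Fin r → ZMod p) × F × F) :
    walshRF p r F (fun x => H (x.2.1 / x.2.2) x.1) b =
      ∑ y : F × F, walshP p r (H (y.1 / y.2)) b.1 *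
        traceChar p F (-(b.2.1 * y.1 + b.2.2 * y.2)) := by
  have split (x : (Fin r → ZMod p) × F × F) :
      zeta p ^ (H (x.2.1 / x.2.2) x.1 - dot b.1 x.1 - Algebra.trace (ZMod p) F (b.2.1 * x.2.1) -
        Algebra.trace (ZMod p) F (b.2.2 * x.2.2)).val =
      stdAddChar (H (x.2.1 / x.2.2) x.1 - dot b.1 x.1) *
        traceChar p F (-(b.2.1 * x.2.1 + b.2.2 * x.2.2)) := by
    rw [zeta_pow_val_eq_stdAddChar, traceChar_apply, ← AddChar.map_add_eq_mul]
    congr 1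
    rw [map_neg (Algebra.trace (ZMod p) F), map_add]
    ring
  simp only [walshRF, split]
  rw [Fintype.sum_prod_type, sum_comm]
  simp only [walshP_eq_sum_stdAddChar, sum_mul]

lemma norm_walshRF_comp_div (g : ZMod p → (Fin r → ZMod p) → ZMod p) (G : Equiv.Perm F)
    {A B : F} (hAB : ∀ t : ZMod p, t • A + B ≠ 0) (b : (Fin r → ZMod p) × F × F) :
    ‖walshRF p r F (fun x => g (Algebra.trace (ZMod p) F (A * G (x.2.1 / x.2.2))) x.1 +
        Algebra.trace (ZMod p) F (B * G (x.2.1 / x.2.2))) b‖ =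
      Fintype.card F *
        ‖walshP p r (g (Algebra.trace (ZMod p) F (A * G (-b.2.2 / b.2.1)))) b.1‖ := by
  classical
  set Φ : F → ℂ := fun z => traceChar p F (B * G z) *
    walshP p r (g (Algebra.trace (ZMod p) F (A * G z))) b.1
  have hΦ : ∑ z, Φ z = 0 :=
    (Equiv.sum_comp G fun w => traceChar p F (B * w) *
      walshP p r (g (Algebra.trace (ZMod p) F (A * w))) b.1).trans
    (sum_traceChar_mul_comp_trace_eq_zero (fun c => walshP p r (g c) b.1) hAB)
  have hW := walshRF_comp_div (fun z y => g (Algebra.trace (ZMod p) F (A * G z)) y +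
    Algebra.trace (ZMod p) F (B * G z)) b
  simp only [walshP_add_const] at hW
  calc _ = ‖∑ y : F × F, Φ (y.1 / y.2) * traceChar p F (-(b.2.1 * y.1 + b.2.2 * y.2))‖ := by
        rw [hW]; rfl
    _ = _ := by
        rw [sum_div_mul_addChar isPrimitive_traceChar Φ hΦ, norm_mul, norm_mul,
          AddChar.norm_apply, one_mul, Complex.norm_natCast]

end WalshRF

theorem stmt15 (p r m s : ℕ) [Fact (Nat.Prime p)] (hm : 3 ≤ m)
    (F : Type) [Field F] [Fintype F] [Algebra (ZMod p) F]
    (hcard : Fintype.card F = p ^ m)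
    (α : Fin m → F) (hli : LinearIndependent (ZMod p) α)
    (f : ZMod p → (Fin r → ZMod p) → ZMod p)
    (hf : ∀ c b, ‖walshP p r (f c) b‖ = (p : ℝ) ^ (((r : ℝ) + (s : ℝ)) / 2) ∨
      walshP p r (f c) b = 0)
    (G : Equiv.Perm F) :
    ∀ a : Fin (m - 1) → ZMod p, a ≠ 0 →
      ((∑ i, a i) ≠ 0 →
        ∀ b : (Fin r → ZMod p) × F × F,
          ‖walshRF p r F (fun x => ∑ i : Fin (m - 1), a i *
              (f (Algebra.trace (ZMod p) F (α ⟨0, by omega⟩ * G (x.2.1 * x.2.2 ^ (p ^ m - 2)))) x.1 +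
                Algebra.trace (ZMod p) F
                  (α ⟨(i : ℕ) + 1, by have := i.isLt; omega⟩ *
                    G (x.2.1 * x.2.2 ^ (p ^ m - 2))))) b‖ =
              (p : ℝ) ^ (((r : ℝ) + 2 * (m : ℝ) + (s : ℝ)) / 2) ∨
            walshRF p r F (fun x => ∑ i : Fin (m - 1), a i *
              (f (Algebra.trace (ZMod p) F (α ⟨0, by omega⟩ * G (x.2.1 * x.2.2 ^ (p ^ m - 2)))) x.1 +
                Algebra.trace (ZMod p) F
                  (α ⟨(i : ℕ) + 1, by have := i.isLt; omega⟩ *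
                    G (x.2.1 * x.2.2 ^ (p ^ m - 2))))) b = 0) ∧
      ((∑ i, a i) = 0 →
        ∀ b : (Fin r → ZMod p) × F × F,
          ‖walshRF p r F (fun x => ∑ i : Fin (m - 1), a i *
              (f (Algebra.trace (ZMod p) F (α ⟨0, by omega⟩ * G (x.2.1 * x.2.2 ^ (p ^ m - 2)))) x.1 +
                Algebra.trace (ZMod p) F
                  (α ⟨(i : ℕ) + 1, by have := i.isLt; omega⟩ *
                    G (x.2.1 * x.2.2 ^ (p ^ m - 2))))) b‖ =
              (p : ℝ) ^ (((r : ℝ) + 2 * (m : ℝ) + (r : ℝ)) / 2) ∨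
            walshRF p r F (fun x => ∑ i : Fin (m - 1), a i *
              (f (Algebra.trace (ZMod p) F (α ⟨0, by omega⟩ * G (x.2.1 * x.2.2 ^ (p ^ m - 2)))) x.1 +
                Algebra.trace (ZMod p) F
                  (α ⟨(i : ℕ) + 1, by have := i.isLt; omega⟩ *
                    G (x.2.1 * x.2.2 ^ (p ^ m - 2))))) b = 0) := by
  intro a ha
  set A := α ⟨0, by omega⟩
  set β := ∑ i : Fin (m - 1), a i • α ⟨i + 1, by omega⟩
  have hq : 2 < Fintype.card F := by
    rw [hcard]
    calc 2 < 2 ^ 3 := by norm_num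
      _ ≤ 2 ^ m := Nat.pow_le_pow_right two_pos hm
      _ ≤ p ^ m := Nat.pow_le_pow_left (Fact.out : p.Prime).two_le m
  have hfun : (fun x : (Fin r → ZMod p) × F × F => ∑ i : Fin (m - 1), a i *
      (f (Algebra.trace (ZMod p) F (A * G (x.2.1 * x.2.2 ^ (p ^ m - 2)))) x.1 +
        Algebra.trace (ZMod p) F (α ⟨i + 1, by omega⟩ * G (x.2.1 * x.2.2 ^ (p ^ m - 2))))) =
      fun x => (∑ i, a i) * f (Algebra.trace (ZMod p) F (A * G (x.2.1 / x.2.2))) x.1 +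
        Algebra.trace (ZMod p) F (β * G (x.2.1 / x.2.2)) := by
    funext x
    rw [← hcard, pow_card_sub_two_eq_inv hq, ← div_eq_mul_inv]
    simp only [β, mul_add, sum_add_distrib, sum_mul, smul_mul_assoc, map_sum, _root_.map_smul,
      smul_eq_mul]
  have hW (b) := norm_walshRF_comp_div (fun c y => (∑ i, a i) * f c y) G
    (hli.smul_add_sum_smul_succ_ne_zero (by omega) ha) b
  have hp : (0 : ℝ) < p := by exact_mod_cast (Fact.out : p.Prime).pos
  simp only [hfun]
  simp only [hcard, Nat.cast_pow] at hW
  refine ⟨fun hε b => ?_, fun hε b => ?_⟩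
  · exact norm_eq_rpow_or_eq_zero_of_norm_eq_pow_mul hp (hW b)
      (IsPlateaued.const_mul (hf _) hε b.1)
  · simp only [hε, zero_mul] at hW ⊢
    exact norm_eq_rpow_or_eq_zero_of_norm_eq_pow_mul hp (hW b) (isPlateaued_zero b.1)
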